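/- arXiv:2501.13355 — 2 statements merged into one kernel-verified Lean document; each statement's English description precedes it below -/
import Mathlib

section
/- Under the setup where φ̂(x) are independent with mean φ(x) and variance η(x)², and η̂(x)² are unbiased estimators of η(x)² (with η̂(x)² independent across x and independent of φ̂(x') for x' ≠ x), for a group S ⊆ X with M = Σ_{x∈S} p(x) > 0 and group mean φ̂* = (Σ_{x∈S} p(x)φ̂(x))/M, the expectation of the estimated loss Δ̂ = Σ_{x∈S} p(x)[(φ̂* − φ̂(x))² − η̂(x)²] equals Σ_{x∈S} p(x)(φ̄* − φ(x))² − Σ_{x∈S} η(x)² p(x)²/M, where φ̄* = (Σ_{x∈S} p(x)φ(x))/M. -/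
/-!
Write `M = ∑ p` and `m(f) = ∑ p f`. For every realisation, the weighted sum of squared deviations
from the weighted mean is `∑ p f² - m(f)² / M`. In expectation `E φ̂(x)² = φ(x)² + η(x)²`, and by
pairwise independence `E m(φ̂)² = m(φ)² + ∑ p² η²`. The estimates `η̂²` remove exactly the
diagonal variances `∑ p η²`, so the only variance left over is the one of the group mean,
`∑ p² η² / M`.
-/

open MeasureTheory ProbabilityTheory Finset

theorem sum_mul_sq_weightedMean_sub {X : Type*} (S : Finset X) (p f : X → ℝ)
    (hM : ∑ x ∈ S, p x ≠ 0) :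
    ∑ x ∈ S, p x * ((∑ y ∈ S, p y * f y) / (∑ y ∈ S, p y) - f x) ^ 2
      = ∑ x ∈ S, p x * f x ^ 2 - (∑ y ∈ S, p y * f y) ^ 2 / ∑ y ∈ S, p y := by
  set M := ∑ y ∈ S, p y
  set m := ∑ y ∈ S, p y * f y
  have expand : ∀ x, p x * (m / M - f x) ^ 2
      = (m / M) ^ 2 * p x - 2 * (m / M) * (p x * f x) + p x * f x ^ 2 := fun x => by ring
  simp only [expand, sum_add_distrib, sum_sub_distrib, ← mul_sum]
  field_simp
  ring

theorem integral_sq_eq_sq_integral_add_variance {Ω : Type*} [MeasurableSpace Ω]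
    {μ : Measure Ω} [IsProbabilityMeasure μ] {Y : Ω → ℝ} (hY : MemLp Y 2 μ) :
    ∫ ω, Y ω ^ 2 ∂μ = μ[Y] ^ 2 + Var[Y; μ] := by
  rw [variance_eq_sub hY]
  simp only [Pi.pow_apply]
  ring

theorem IndepFun.integral_sq_sum_const_mul {Ω ι : Type*} [MeasurableSpace Ω] {μ : Measure Ω}
    [IsProbabilityMeasure μ] {s : Finset ι} (c : ι → ℝ) {Y : ι → Ω → ℝ}
    (hY : ∀ i ∈ s, MemLp (Y i) 2 μ) (hind : Set.Pairwise ↑s fun i j => Y i ⟂ᵢ[μ] Y j) :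
    ∫ ω, (∑ i ∈ s, c i * Y i ω) ^ 2 ∂μ
      = (∑ i ∈ s, c i * μ[Y i]) ^ 2 + ∑ i ∈ s, c i ^ 2 * Var[Y i; μ] := by
  have hcY : ∀ i ∈ s, MemLp (fun ω => c i * Y i ω) 2 μ := fun i hi => (hY i hi).const_mul (c i)
  have hvar : Var[fun ω => ∑ i ∈ s, c i * Y i ω; μ] = ∑ i ∈ s, c i ^ 2 * Var[Y i; μ] := by
    rw [← sum_fn, IndepFun.variance_sum hcY fun i hi j hj hij =>
      (hind hi hj hij).comp (measurable_const_mul (c i)) (measurable_const_mul (c j))]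
    exact sum_congr rfl fun i _ => variance_const_mul _ _ _
  have hmean : ∫ ω, ∑ i ∈ s, c i * Y i ω ∂μ = ∑ i ∈ s, c i * μ[Y i] := by
    rw [integral_finsetSum s fun i hi => (hcY i hi).integrable one_le_two]
    exact sum_congr rfl fun i _ => integral_const_mul _ _
  rw [integral_sq_eq_sq_integral_add_variance (memLp_finsetSum s hcY), hvar, hmean]

theorem stmt3_general {X Ω : Type*} [MeasurableSpace Ω]
    (μ : Measure Ω) [IsProbabilityMeasure μ]
    (p φ η : X → ℝ) (φhat etahat2 : X → Ω → ℝ)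
    (hmeasφ : ∀ x, Measurable (φhat x))
    (hind : ProbabilityTheory.iIndepFun
      (m := fun _ : X => (inferInstance : MeasurableSpace (ℝ × ℝ)))
      (fun x ω => (φhat x ω, etahat2 x ω)) μ)
    (hint2 : ∀ x, Integrable (fun ω => (φhat x ω) ^ 2) μ)
    (hintη : ∀ x, Integrable (etahat2 x) μ)
    (hmean : ∀ x, ∫ ω, φhat x ω ∂μ = φ x)
    (hvar : ∀ x, ∫ ω, (φhat x ω - φ x) ^ 2 ∂μ = (η x) ^ 2)
    (hmeanη : ∀ x, ∫ ω, etahat2 x ω ∂μ = (η x) ^ 2)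
    (S : Finset X) (hM : 0 < ∑ x ∈ S, p x) :
    ∫ ω, (∑ x ∈ S, p x *
        (((∑ y ∈ S, p y * φhat y ω) / (∑ y ∈ S, p y) - φhat x ω) ^ 2
          - etahat2 x ω)) ∂μ
      = (∑ x ∈ S, p x *
          ((∑ y ∈ S, p y * φ y) / (∑ y ∈ S, p y) - φ x) ^ 2)
        - ∑ x ∈ S, η x ^ 2 * p x ^ 2 / (∑ y ∈ S, p y) := by
  have hL2 : ∀ x, MemLp (φhat x) 2 μ := fun x =>
    (memLp_two_iff_integrable_sq (hmeasφ x).aestronglyMeasurable).2 (hint2 x)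
  have hVar : ∀ x, Var[φhat x; μ] = η x ^ 2 := fun x => by
    rw [variance_eq_integral (hmeasφ x).aemeasurable, hmean, hvar]
  have hsq : ∀ x, ∫ ω, φhat x ω ^ 2 ∂μ = φ x ^ 2 + η x ^ 2 := fun x => by
    rw [integral_sq_eq_sq_integral_add_variance (hL2 x), hmean, hVar]
  have hpair : Set.Pairwise ↑S fun x y => φhat x ⟂ᵢ[μ] φhat y := fun x _ y _ hxy =>
    (hind.indepFun hxy).comp measurable_fst measurable_fst
  have hgroup : ∫ ω, (∑ y ∈ S, p y * φhat y ω) ^ 2 ∂μ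
      = (∑ y ∈ S, p y * φ y) ^ 2 + ∑ y ∈ S, p y ^ 2 * η y ^ 2 := by
    simp only [IndepFun.integral_sq_sum_const_mul p (fun x _ => hL2 x) hpair, hmean, hVar]
  have hintSq : Integrable (fun ω => ∑ x ∈ S, p x * φhat x ω ^ 2) μ :=
    integrable_finsetSum S fun x _ => (hint2 x).const_mul (p x)
  have hintGroupSq : Integrable (fun ω => (∑ y ∈ S, p y * φhat y ω) ^ 2 / ∑ y ∈ S, p y) μ :=
    (memLp_finsetSum S fun y _ => (hL2 y).const_mul (p y)).integrable_sq.div_const _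
  have hintEst : Integrable (fun ω => ∑ x ∈ S, p x * etahat2 x ω) μ :=
    integrable_finsetSum S fun x _ => (hintη x).const_mul (p x)
  -- rewrites both sides: once with `f = (φhat · ω)` under the integral, once with `f = φ`
  simp only [mul_sub, sum_sub_distrib, sum_mul_sq_weightedMean_sub S p _ hM.ne']
  rw [integral_sub (f := fun ω => _ - _) (hintSq.sub hintGroupSq) hintEst,
    integral_sub hintSq hintGroupSq,
    integral_finsetSum S fun x _ => (hint2 x).const_mul (p x),
    integral_finsetSum S fun x _ => (hintη x).const_mul (p x), integral_div, hgroup]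
  simp only [integral_const_mul, hsq, hmeanη]
  rw [← sum_div]
  simp only [mul_add, sum_add_distrib, mul_comm (η _ ^ 2)]
  ring

/-- Exact expectation of the variance-corrected within-group squared
prediction error Δ̂: the only residual bias is the degrees-of-freedom term. -/
theorem stmt3 {X Ω : Type*} [Fintype X] [MeasurableSpace Ω]
    (μ : Measure Ω) [IsProbabilityMeasure μ]
    (p φ η : X → ℝ) (φhat etahat2 : X → Ω → ℝ)
    (hp : ∀ x, 0 ≤ p x)
    (hmeasφ : ∀ x, Measurable (φhat x))
    (hmeasη : ∀ x, Measurable (etahat2 x))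
    (hind : ProbabilityTheory.iIndepFun
      (m := fun _ : X => (inferInstance : MeasurableSpace (ℝ × ℝ)))
      (fun x ω => (φhat x ω, etahat2 x ω)) μ)
    (hint2 : ∀ x, Integrable (fun ω => (φhat x ω) ^ 2) μ)
    (hintη : ∀ x, Integrable (etahat2 x) μ)
    (hmean : ∀ x, ∫ ω, φhat x ω ∂μ = φ x)
    (hvar : ∀ x, ∫ ω, (φhat x ω - φ x) ^ 2 ∂μ = (η x) ^ 2)
    (hmeanη : ∀ x, ∫ ω, etahat2 x ω ∂μ = (η x) ^ 2)
    (S : Finset X) (hM : 0 < ∑ x ∈ S, p x) :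
    ∫ ω, (∑ x ∈ S, p x *
        (((∑ y ∈ S, p y * φhat y ω) / (∑ y ∈ S, p y) - φhat x ω) ^ 2
          - etahat2 x ω)) ∂μ
      = (∑ x ∈ S, p x *
          ((∑ y ∈ S, p y * φ y) / (∑ y ∈ S, p y) - φ x) ^ 2)
        - ∑ x ∈ S, η x ^ 2 * p x ^ 2 / (∑ y ∈ S, p y) :=
  stmt3_general μ p φ η φhat etahat2 hmeasφ hind hint2 hintη hmean hvar hmeanη S hM
end

section
/- Let φ̂ⱼ : X → ℝ and πⱼ : X → {0,1} for j = 1,…,M, and define φ̄(x) = (Σⱼ φ̂ⱼ(x)πⱼ(x))/(Σⱼ πⱼ(x)) (when the denominator is positive) and π̄(x) = (1/M)Σⱼ πⱼ(x). Then for any φ(x) ∈ ℝ and σ² ≥ 0, (1/M)Σⱼ [(φ(x) − φ̂ⱼ(x))² πⱼ(x) + σ²(1 − πⱼ(x))] ≥ (φ(x) − φ̄(x))² π̄(x) + σ²(1 − π̄(x)). -/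
open Finset

/-
The abstention terms contribute `σ² (1 - π̄)` to both sides, so only the prediction terms matter.
There the claim is the weighted Jensen inequality `(c - x̄)² ∑ wⱼ ≤ ∑ (c - xⱼ)² wⱼ` for the
weights `wⱼ = πⱼ ≥ 0` and the weighted mean `x̄ = (∑ xⱼ wⱼ) / ∑ wⱼ`, which is Cauchy–Schwarz
applied to `√wⱼ` and `√wⱼ (c - xⱼ)`.
-/

section WeightedMean

variable {ι R : Type*} [Field R] [LinearOrder R] [IsStrictOrderedRing R] (s : Finset ι)
  {w : ι → R}

theorem sq_sum_mul_le_sum_mul_sum_sq_mul (hw : ∀ i ∈ s, 0 ≤ w i) (a : ι → R) :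
    (∑ i ∈ s, a i * w i) ^ 2 ≤ (∑ i ∈ s, w i) * ∑ i ∈ s, a i ^ 2 * w i :=
  sum_sq_le_sum_mul_sum_of_sq_le_mul s hw
    (fun i hi => mul_nonneg (sq_nonneg _) (hw i hi)) (fun i _ => le_of_eq (by ring))

theorem sq_sub_weightedMean_mul_sum_le (hw : ∀ i ∈ s, 0 ≤ w i) (x : ι → R) (c : R) :
    (c - (∑ i ∈ s, x i * w i) / ∑ i ∈ s, w i) ^ 2 * ∑ i ∈ s, w i
      ≤ ∑ i ∈ s, (c - x i) ^ 2 * w i := by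
  set S := ∑ i ∈ s, w i
  have hRHS : 0 ≤ ∑ i ∈ s, (c - x i) ^ 2 * w i :=
    sum_nonneg fun i hi => mul_nonneg (sq_nonneg _) (hw i hi)
  rcases (sum_nonneg hw).eq_or_lt' with hS | hS
  · simpa [S, hS] using hRHS
  have hdev : ∑ i ∈ s, (c - x i) * w i = c * S - ∑ i ∈ s, x i * w i := by
    simp only [sub_mul, sum_sub_distrib, S, mul_sum]
  calc (c - (∑ i ∈ s, x i * w i) / S) ^ 2 * S
      = (∑ i ∈ s, (c - x i) * w i) ^ 2 / S := by
        rw [hdev]; field_simp [S, hS.ne']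
    _ ≤ ∑ i ∈ s, (c - x i) ^ 2 * w i := by
        rw [div_le_iff₀' hS]
        exact sq_sum_mul_le_sum_mul_sum_sq_mul s hw _

end WeightedMean

theorem stmt18_general (M : ℕ) (hM : 0 < M) (π φhat : Fin M → ℝ)
    (hπ : ∀ j, π j = 0 ∨ π j = 1) (φ σ2 : ℝ) :
    (φ - (∑ j, φhat j * π j) / (∑ j, π j)) ^ 2 * ((∑ j, π j) / M)
        + σ2 * (1 - (∑ j, π j) / M)
      ≤ (1 / M) * ∑ j, ((φ - φhat j) ^ 2 * π j + σ2 * (1 - π j)) := by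
  have hMpos : (0 : ℝ) < M := by exact_mod_cast hM
  have hπ_nonneg : ∀ j ∈ univ, 0 ≤ π j := fun j _ => by rcases hπ j with h | h <;> simp [h]
  have hsplit : ∑ j, ((φ - φhat j) ^ 2 * π j + σ2 * (1 - π j))
      = ∑ j, (φ - φhat j) ^ 2 * π j + σ2 * (M - ∑ j, π j) := by
    simp [sum_add_distrib, ← mul_sum, sum_sub_distrib]
  set S := ∑ j, π j
  calc (φ - (∑ j, φhat j * π j) / S) ^ 2 * (S / M) + σ2 * (1 - S / M)
      = ((φ - (∑ j, φhat j * π j) / S) ^ 2 * S + σ2 * (M - S)) / M := by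
        field_simp
    _ ≤ (∑ j, (φ - φhat j) ^ 2 * π j + σ2 * (M - S)) / M := by
        gcongr
        exact sq_sub_weightedMean_mul_sum_le univ hπ_nonneg φhat φ
    _ = 1 / M * ∑ j, ((φ - φhat j) ^ 2 * π j + σ2 * (1 - π j)) := by
        rw [hsplit, one_div_mul_eq_div]

/-- Ensemble/generalizability-score inequality: the average loss of the
M sub-models dominates the loss of the aggregate prediction weighted by the
generalizability score (Jensen's inequality). -/
theorem stmt18 (M : ℕ) (hM : 0 < M) (π φhat : Fin M → ℝ)
    (hπ : ∀ j, π j = 0 ∨ π j = 1) (φ σ2 : ℝ) (hσ : 0 ≤ σ2) :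
    (φ - (∑ j, φhat j * π j) / (∑ j, π j)) ^ 2 * ((∑ j, π j) / M)
        + σ2 * (1 - (∑ j, π j) / M)
      ≤ (1 / M) * ∑ j, ((φ - φhat j) ^ 2 * π j + σ2 * (1 - π j)) :=
  stmt18_general M hM π φhat hπ φ σ2
end
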